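/- arXiv:1006.3997 — 5 statements merged into one kernel-verified Lean document; each statement's English description precedes it below -/
import Mathlib

section
/- Let 0 ≤ E_0 < E_1 < ... be an increasing sequence with E_{2j-1} = j² + O(1) and E_{2j} = j² + O(1) as j → ∞, and suppose ∑_{j=1}^∞ j^{2k+2}(√(E_{2j}-E_0) - √(E_{2j-1}-E_0))² < ∞ for some integer k > 2. Then ∑_{j=1}^∞ E_{2j-1}(E_{2j} - E_{2j-1}) < ∞. -/
/-!
With `a_j = √(E_{2j} - E_0)` and `b_j = √(E_{2j-1} - E_0)`, the gap is
`E_{2j} - E_{2j-1} = (a_j + b_j)(a_j - b_j)`, where `a_j + b_j = O(j)` and `E_{2j-1} = O(j²)`;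
so the `j`-th term is `O(j³ (a_j - b_j))`. Writing `j³ (a_j - b_j) = j^{-(k-2)} · j^{k+1} (a_j - b_j)`,
Cauchy–Schwarz makes this summable, because `∑ j^{-2(k-2)} < ∞` for `k > 2`.
-/

open Real

theorem Summable.mul_of_summable_sq {ι : Type*} {f g : ι → ℝ}
    (hf : Summable fun i => f i ^ 2) (hg : Summable fun i => g i ^ 2) :
    Summable fun i => f i * g i :=
  ((hf.add hg).div_const 2).of_norm_bounded fun i => by
    rw [norm_mul, Real.norm_eq_abs, Real.norm_eq_abs, le_div_iff₀ two_pos, ← sq_abs (f i),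
      ← sq_abs (g i)]
    nlinarith [two_mul_le_add_sq |f i| |g i|]

theorem summable_one_div_succ_pow {p : ℕ} (hp : 1 < p) :
    Summable fun j : ℕ => 1 / ((j : ℝ) + 1) ^ p := by
  simpa using (summable_nat_add_iff 1).2 (Real.summable_one_div_nat_pow.2 hp)

theorem summable_succ_pow_three_mul_of_summable_sq {k : ℕ} (hk : 2 < k) {d : ℕ → ℝ}
    (hd : Summable fun j : ℕ => ((j : ℝ) + 1) ^ (2 * k + 2) * d j ^ 2) :
    Summable fun j : ℕ => ((j : ℝ) + 1) ^ 3 * d j := by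
  have hweight : Summable fun j : ℕ => (1 / ((j : ℝ) + 1) ^ (k - 2)) ^ 2 := by
    simpa only [div_pow, one_pow, ← pow_mul] using summable_one_div_succ_pow (p := (k - 2) * 2)
      (by omega)
  have hrest : Summable fun j : ℕ => (((j : ℝ) + 1) ^ (k + 1) * d j) ^ 2 := by
    simpa only [mul_pow, ← pow_mul, add_mul, one_mul, mul_comm k 2] using hd
  refine (hweight.mul_of_summable_sq hrest).congr fun j => ?_
  have hk' : k + 1 = 3 + (k - 2) := by omega
  rw [hk', pow_add]
  field_simp

theorem sub_eq_sqrt_add_mul_sqrt_sub {c x y : ℝ} (hx : c ≤ x) (hy : c ≤ y) :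
    y - x = (√(y - c) + √(x - c)) * (√(y - c) - √(x - c)) := by
  rw [← sq_sub_sq, sq_sqrt (sub_nonneg.2 hy), sq_sqrt (sub_nonneg.2 hx)]
  ring

theorem sqrt_sq_add_le {n K : ℝ} (hn : 1 ≤ n) (hK : 0 ≤ K) : √(n ^ 2 + K) ≤ (1 + √K) * n := by
  rw [Real.sqrt_le_left (by positivity)]
  have hn2 : K ≤ K * n ^ 2 := le_mul_of_one_le_right hK (one_le_pow₀ hn)
  nlinarith [sq_sqrt hK, sqrt_nonneg K]

theorem abs_mul_sub_le_mul_sqrt_sub {c x y n K : ℝ} (hcx : c ≤ x) (hxy : x ≤ y) (hn : 1 ≤ n)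
    (hK : 0 ≤ K) (hx : |x| ≤ n ^ 2 + K) (hy : y - c ≤ n ^ 2 + K) :
    |x * (y - x)| ≤ 2 * (1 + K) * (1 + √K) * n ^ 3 * (√(y - c) - √(x - c)) := by
  have hgap := sub_eq_sqrt_add_mul_sqrt_sub hcx (hcx.trans hxy)
  have hsqrt : √(x - c) ≤ √(y - c) := sqrt_le_sqrt (by linarith)
  have hx' : |x| ≤ (1 + K) * n ^ 2 := by
    nlinarith [le_mul_of_one_le_right hK (one_le_pow₀ hn : 1 ≤ n ^ 2)]
  have hsum : √(y - c) + √(x - c) ≤ 2 * ((1 + √K) * n) := by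
    linarith [sqrt_le_sqrt hy, sqrt_sq_add_le hn hK]
  calc |x * (y - x)| = |x| * ((√(y - c) + √(x - c)) * (√(y - c) - √(x - c))) := by
        rw [abs_mul, abs_of_nonneg (sub_nonneg.2 hxy), hgap]
    _ ≤ ((1 + K) * n ^ 2) * ((2 * ((1 + √K) * n)) * (√(y - c) - √(x - c))) := by
        have hdiff : 0 ≤ √(y - c) - √(x - c) := sub_nonneg.2 hsqrt
        gcongr
    _ = 2 * (1 + K) * (1 + √K) * n ^ 3 * (√(y - c) - √(x - c)) := by ring

/-- The gap index `j ≥ 1` of the paper is `j + 1` here, so `E_{2j-1} = E (2*j+1)` and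
`E_{2j} = E (2*j+2)`. -/
theorem summable_weighted_gap_lengths_general
    (E : ℕ → ℝ) (hmono : StrictMono E)
    (M : ℝ)
    (hodd : ∀ j : ℕ, |E (2 * j + 1) - ((j : ℝ) + 1) ^ 2| ≤ M)
    (heven : ∀ j : ℕ, |E (2 * j + 2) - ((j : ℝ) + 1) ^ 2| ≤ M)
    (k : ℕ) (hk : 2 < k)
    (hsum : Summable (fun j : ℕ =>
      ((j : ℝ) + 1) ^ (2 * k + 2) *
        (Real.sqrt (E (2 * j + 2) - E 0) - Real.sqrt (E (2 * j + 1) - E 0)) ^ 2)) :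
    Summable (fun j : ℕ => E (2 * j + 1) * (E (2 * j + 2) - E (2 * j + 1))) := by
  set K := |M| + |E 0|
  have hK : 0 ≤ K := by positivity
  refine ((summable_succ_pow_three_mul_of_summable_sq hk hsum).mul_left
    (2 * (1 + K) * (1 + √K))).of_norm_bounded fun j => ?_
  have hM := le_abs_self M
  have hE0 := abs_nonneg (E 0)
  obtain ⟨hodd_lo, hodd_hi⟩ := abs_le.1 (hodd j)
  have hx : |E (2 * j + 1)| ≤ ((j : ℝ) + 1) ^ 2 + K :=
    abs_le.2 ⟨by nlinarith [neg_abs_le M], by linarith⟩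
  have hy : E (2 * j + 2) - E 0 ≤ ((j : ℝ) + 1) ^ 2 + K := by
    linarith [(abs_le.1 (heven j)).2, neg_abs_le (E 0)]
  rw [Real.norm_eq_abs, ← mul_assoc]
  exact abs_mul_sub_le_mul_sqrt_sub (hmono.monotone (Nat.zero_le _))
    (hmono.monotone (Nat.le_succ _)) (by simp) hK hx hy

/-- Smooth periodic potentials satisfy condition (1) of Hypothesis 1.1:
if `E_{2j-1} = j² + O(1)`, `E_{2j} = j² + O(1)` and
`∑ j^{2k+2} (√(E_{2j}-E_0) - √(E_{2j-1}-E_0))² < ∞` for some `k > 2`, then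
`∑ E_{2j-1}(E_{2j} - E_{2j-1}) < ∞`.  Here the gap index `j ≥ 1` is encoded as
`j+1` for `j : ℕ`, so `E_{2j-1} = E (2*j+1)` and `E_{2j} = E (2*j+2)`. -/
theorem summable_weighted_gap_lengths
    (E : ℕ → ℝ) (hE0 : 0 ≤ E 0) (hmono : StrictMono E)
    (M : ℝ)
    (hodd : ∀ j : ℕ, |E (2 * j + 1) - ((j : ℝ) + 1) ^ 2| ≤ M)
    (heven : ∀ j : ℕ, |E (2 * j + 2) - ((j : ℝ) + 1) ^ 2| ≤ M)
    (k : ℕ) (hk : 2 < k)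
    (hsum : Summable (fun j : ℕ =>
      ((j : ℝ) + 1) ^ (2 * k + 2) *
        (Real.sqrt (E (2 * j + 2) - E 0) - Real.sqrt (E (2 * j + 1) - E 0)) ^ 2)) :
    Summable (fun j : ℕ => E (2 * j + 1) * (E (2 * j + 2) - E (2 * j + 1))) :=
  summable_weighted_gap_lengths_general E hmono M hodd heven k hk hsum
end

section
/- Let E_1 < E_2 < E_3 < ... be positive reals with ∑_{j} 1/E_{2j-1} < ∞ and ∑_j (E_{2j} - E_{2j-1}) < ∞, and for each j let μ_j : ℝ → ℝ be a function with μ_j(x) ∈ [E_{2j-1}, E_{2j}] for all x. Fix z ∈ ℂ and let m ∈ ℕ satisfy |z| ≤ E_{2m-1}. Then for every n > m and every x ∈ ℝ: exp(-∑_{j=n+1}^∞ |z|/(E_{2j-1} - |z|)) ≤ ∏_{j=n+1}^∞ |(z - μ_j(x))/E_{2j-1}| ≤ exp((1/E_{2n+1}) ∑_{j=n+1}^∞ (E_{2j} - E_{2j-1}) + |z| ∑_{j=n+1}^∞ 1/E_{2j-1}). -/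
/-!
Write `c = |z|` and `A = E_{2j-1} ≤ μ_j(x) ≤ B = E_{2j}`. Each factor satisfies
`(A - c)/A ≤ |(z - μ_j(x))/A| ≤ 1 + (B - A)/A + c/A`, and `1 + t ≤ exp t` turns these into
`exp(-c/(A - c)) ≤ |(z - μ_j(x))/A| ≤ exp((B - A)/E_{2n+1} + c/A)`. Both exponents are summable in
`j`, so the logarithms of the factors are summable, the product equals the exponential of their
sum, and the bounds pass to the sums.
-/

open Real

theorem Real.exp_tsum_le_tprod_and_tprod_le_exp_tsum {ι : Type*} {f l u : ι → ℝ}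
    (hl : ∀ i, exp (l i) ≤ f i) (hu : ∀ i, f i ≤ exp (u i))
    (hl_sum : Summable l) (hu_sum : Summable u) :
    exp (∑' i, l i) ≤ ∏' i, f i ∧ ∏' i, f i ≤ exp (∑' i, u i) := by
  have hf_pos (i : ι) : 0 < f i := (exp_pos _).trans_le (hl i)
  have hl_log (i : ι) : l i ≤ log (f i) := (le_log_iff_exp_le (hf_pos i)).2 (hl i)
  have hu_log (i : ι) : log (f i) ≤ u i := (log_le_iff_le_exp (hf_pos i)).2 (hu i)
  have hlog_sum : Summable fun i => log (f i) := by
    have hgap : Summable fun i => log (f i) - l i :=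
      .of_nonneg_of_le (fun i => sub_nonneg.2 (hl_log i))
        (fun i => sub_le_sub_right (hu_log i) _) (hu_sum.sub hl_sum)
    simpa using hgap.add hl_sum
  have hprod : ∏' i, f i = exp (∑' i, log (f i)) := by
    have h := hlog_sum.hasSum.rexp
    simp only [Function.comp_def, exp_log (hf_pos _)] at h
    exact h.tprod_eq
  rw [hprod, exp_le_exp, exp_le_exp]
  exact ⟨hl_sum.tsum_le_tsum hl_log hlog_sum, hlog_sum.tsum_le_tsum hu_log hu_sum⟩

theorem Real.exp_neg_div_sub_le_sub_div {c a : ℝ} (hc : 0 ≤ c) (hca : c < a) :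
    exp (-(c / (a - c))) ≤ (a - c) / a := by
  have ha : 0 < a := hc.trans_lt hca
  have hac : 0 < a - c := sub_pos.2 hca
  have h := one_sub_inv_le_log_of_pos (div_pos hac ha)
  rw [inv_div, one_sub_div hac.ne', sub_sub_cancel_left, neg_div] at h
  exact (le_log_iff_exp_le (div_pos hac ha)).1 h

theorem exp_neg_div_sub_le_norm_sub_ofReal_div {z : ℂ} {a μ : ℝ} (hza : ‖z‖ < a)
    (haμ : a ≤ μ) : exp (-(‖z‖ / (a - ‖z‖))) ≤ ‖(z - μ) / a‖ := by
  have ha : 0 < a := (norm_nonneg z).trans_lt hza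
  have hμ : ‖(μ : ℂ)‖ = μ := by rw [Complex.norm_real, norm_of_nonneg (ha.le.trans haμ)]
  calc exp (-(‖z‖ / (a - ‖z‖))) ≤ (a - ‖z‖) / a := exp_neg_div_sub_le_sub_div (norm_nonneg z) hza
    _ ≤ ‖z - μ‖ / a := by
        gcongr
        have := norm_sub_norm_le (μ : ℂ) z
        rw [hμ, norm_sub_rev] at this
        linarith
    _ = ‖(z - μ) / a‖ := by rw [norm_div, Complex.norm_real, norm_of_nonneg ha.le]

theorem norm_sub_ofReal_div_le_exp {z : ℂ} {e a μ b : ℝ} (he : 0 < e) (hea : e ≤ a)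
    (haμ : a ≤ μ) (hμb : μ ≤ b) : ‖(z - μ) / a‖ ≤ exp ((b - a) / e + ‖z‖ / a) := by
  have ha : 0 < a := he.trans_le hea
  have hμ : ‖(μ : ℂ)‖ = μ := by rw [Complex.norm_real, norm_of_nonneg (ha.le.trans haμ)]
  calc ‖(z - μ) / a‖ = ‖z - μ‖ / a := by rw [norm_div, Complex.norm_real, norm_of_nonneg ha.le]
    _ ≤ (‖z‖ + b) / a := by
        gcongr
        exact (norm_sub_le z μ).trans (by rw [hμ]; linarith)
    _ = (b - a) / a + ‖z‖ / a + 1 := by field_simp; ring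
    _ ≤ (b - a) / e + ‖z‖ / a + 1 := by gcongr; linarith
    _ ≤ exp ((b - a) / e + ‖z‖ / a) := add_one_le_exp _

theorem summable_div_sub_of_summable_one_div {ι : Type*} {a : ι → ℝ} {c e : ℝ} (hc : 0 ≤ c)
    (hce : c < e) (hea : ∀ i, e ≤ a i) (ha : Summable fun i => 1 / a i) :
    Summable fun i => c / (a i - c) := by
  refine .of_nonneg_of_le (fun i => div_nonneg hc (by linarith [hea i])) (fun i => ?_)
    (ha.mul_left (c * e / (e - c)))
  have hac : 0 < a i - c := by linarith [hea i]
  have hec : 0 < e - c := by linarith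
  rw [mul_one_div, div_div, div_le_div_iff₀ hac (mul_pos hec (by linarith [hea i]))]
  nlinarith [mul_nonneg (mul_nonneg hc hc) (sub_nonneg.2 (hea i))]

theorem tail_product_estimate_general
    (E : ℕ → ℝ) (hE0 : 0 ≤ E 0) (hmono : StrictMono E)
    (μ : ℕ → ℝ → ℝ)
    (hμ : ∀ j : ℕ, 1 ≤ j → ∀ x : ℝ, μ j x ∈ Set.Icc (E (2 * j - 1)) (E (2 * j)))
    (hinv : Summable (fun j : ℕ => 1 / E (2 * j + 1)))
    (hgap : Summable (fun j : ℕ => E (2 * j + 2) - E (2 * j + 1)))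
    (z : ℂ) (m : ℕ) (hz : ‖z‖ ≤ E (2 * m - 1))
    (n : ℕ) (hn : m < n) (x : ℝ) :
    Real.exp (-∑' i : ℕ, ‖z‖ / (E (2 * n + 2 * i + 1) - ‖z‖)) ≤
      (∏' i : ℕ, ‖(z - (μ (n + 1 + i) x : ℝ)) / (E (2 * n + 2 * i + 1) : ℝ)‖) ∧
    (∏' i : ℕ, ‖(z - (μ (n + 1 + i) x : ℝ)) / (E (2 * n + 2 * i + 1) : ℝ)‖) ≤
      Real.exp ((1 / E (2 * n + 1)) * (∑' i : ℕ, (E (2 * n + 2 * i + 2) - E (2 * n + 2 * i + 1)))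
        + ‖z‖ * (∑' i : ℕ, 1 / E (2 * n + 2 * i + 1))) := by
  have hfirst_pos : 0 < E (2 * n + 1) := hE0.trans_lt (hmono (by omega))
  have hz_first : ‖z‖ < E (2 * n + 1) := hz.trans_lt (hmono (by omega))
  have hfirst_le (i : ℕ) : E (2 * n + 1) ≤ E (2 * n + 2 * i + 1) := hmono.monotone (by omega)
  have hμ_gap (i : ℕ) :
      μ (n + 1 + i) x ∈ Set.Icc (E (2 * n + 2 * i + 1)) (E (2 * n + 2 * i + 2)) := by
    have h := hμ (n + 1 + i) (by omega) x
    rwa [show 2 * (n + 1 + i) - 1 = 2 * n + 2 * i + 1 by omega,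
      show 2 * (n + 1 + i) = 2 * n + 2 * i + 2 by omega] at h
  have hinv_tail : Summable fun i => 1 / E (2 * n + 2 * i + 1) :=
    ((summable_nat_add_iff n).2 hinv).congr fun i => by ring_nf
  have hgap_tail : Summable fun i => E (2 * n + 2 * i + 2) - E (2 * n + 2 * i + 1) :=
    ((summable_nat_add_iff n).2 hgap).congr fun i => by ring_nf
  have hz_tail : Summable fun i => ‖z‖ / E (2 * n + 2 * i + 1) :=
    (hinv_tail.mul_left ‖z‖).congr fun i => mul_one_div _ _
  obtain ⟨hlower, hupper⟩ := Real.exp_tsum_le_tprod_and_tprod_le_exp_tsum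
    (fun i => exp_neg_div_sub_le_norm_sub_ofReal_div
      (hz_first.trans_le (hfirst_le i)) (hμ_gap i).1)
    (fun i => norm_sub_ofReal_div_le_exp hfirst_pos (hfirst_le i) (hμ_gap i).1 (hμ_gap i).2)
    (summable_div_sub_of_summable_one_div (norm_nonneg z) hz_first hfirst_le hinv_tail).neg
    ((hgap_tail.div_const _).add hz_tail)
  refine ⟨by rwa [tsum_neg] at hlower, hupper.trans_eq ?_⟩
  rw [(hgap_tail.div_const _).tsum_add hz_tail,
    tsum_div_const, one_div_mul_eq_div, ← tsum_mul_left]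
  simp only [mul_one_div]

/-- Two-sided estimate for the tail of the product defining `G(z,x)`:
for `|z| ≤ E_{2m-1}` and `n > m`,
`exp(-∑_{j=n+1}^∞ |z|/(E_{2j-1}-|z|)) ≤ ∏_{j=n+1}^∞ |(z-μ_j(x))/E_{2j-1}|
 ≤ exp((1/E_{2n+1}) ∑_{j=n+1}^∞ (E_{2j}-E_{2j-1}) + |z| ∑_{j=n+1}^∞ 1/E_{2j-1})`.
The tail index `j = n+1+i` for `i : ℕ`, so `E_{2j-1} = E (2*n+2*i+1)` and
`E_{2j} = E (2*n+2*i+2)`. -/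
theorem tail_product_estimate
    (E : ℕ → ℝ) (hE0 : 0 ≤ E 0) (hmono : StrictMono E)
    (μ : ℕ → ℝ → ℝ)
    (hμ : ∀ j : ℕ, 1 ≤ j → ∀ x : ℝ, μ j x ∈ Set.Icc (E (2 * j - 1)) (E (2 * j)))
    (hinv : Summable (fun j : ℕ => 1 / E (2 * j + 1)))
    (hgap : Summable (fun j : ℕ => E (2 * j + 2) - E (2 * j + 1)))
    (z : ℂ) (m : ℕ) (hm : 1 ≤ m) (hz : ‖z‖ ≤ E (2 * m - 1))
    (n : ℕ) (hn : m < n) (x : ℝ) :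
    Real.exp (-∑' i : ℕ, ‖z‖ / (E (2 * n + 2 * i + 1) - ‖z‖)) ≤
      (∏' i : ℕ, ‖(z - (μ (n + 1 + i) x : ℝ)) / (E (2 * n + 2 * i + 1) : ℝ)‖) ∧
    (∏' i : ℕ, ‖(z - (μ (n + 1 + i) x : ℝ)) / (E (2 * n + 2 * i + 1) : ℝ)‖) ≤
      Real.exp ((1 / E (2 * n + 1)) * (∑' i : ℕ, (E (2 * n + 2 * i + 2) - E (2 * n + 2 * i + 1)))
        + ‖z‖ * (∑' i : ℕ, 1 / E (2 * n + 2 * i + 1))) :=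
  tail_product_estimate_general E hE0 hmono μ hμ hinv hgap z m hz n hn x
end

section
/- Let E_j satisfy ∑_j (E_{2j} - E_{2j-1}) < ∞ and ∑_j 1/E_{2j-1} < ∞, let μ_j(x), μ_j(0) ∈ [E_{2j-1}, E_{2j}], and suppose z ∈ ℂ satisfies |z - μ_j(0)| > ε for all j. Then |G(z,x)/G(z,0)| = |∏_{j=1}^∞ (z - μ_j(x))/(z - μ_j(0))| ≤ exp(C/|z|) for a constant C independent of x and z. -/
/-!
With `γ_j` the length of the `j`-th gap, each factor is at most
`1 + γ_j / |z - μ_j(0)|`. Since `|z - μ_j(0)| > ε`, also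
`|z| ≤ |z - μ_j(0)| + |μ_j(0)| ≤ (1 + |μ_j(0)| / ε) |z - μ_j(0)|`, so the factor is at most
`exp (w_j / |z|)` with `w_j = (1 + (|E_{2j}| + γ_j) / ε) γ_j`. The gap hypotheses make `w`
summable, and `C = ∑ w_j` works uniformly in `x` and `z`.
-/

open Real Set

theorem norm_tprod_le_exp_tsum {ι E : Type*} [SeminormedCommRing E] [NormMulClass E]
    [NormOneClass E] {f : ι → E} {c : ι → ℝ} (hc : Summable c) (hc0 : ∀ i, 0 ≤ c i)
    (hf : ∀ i, ‖f i‖ ≤ exp (c i)) : ‖∏' i, f i‖ ≤ exp (∑' i, c i) := by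
  have hone : 1 ≤ exp (∑' i, c i) := one_le_exp (tsum_nonneg hc0)
  by_cases hmul : Multipliable f
  · rw [hmul.norm_tprod]
    refine tprod_le_of_prod_le' hone fun s ↦ ?_
    calc ∏ i ∈ s, ‖f i‖ ≤ ∏ i ∈ s, exp (c i) :=
          Finset.prod_le_prod (fun i _ ↦ norm_nonneg _) fun i _ ↦ hf i
      _ = exp (∑ i ∈ s, c i) := (exp_sum _ _).symm
      _ ≤ exp (∑' i, c i) := exp_le_exp.2 (hc.sum_le_tsum s fun i _ ↦ hc0 i)
  · simpa [tprod_eq_one_of_not_multipliable hmul] using hone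

theorem norm_div_sub_le_exp {𝕜 : Type*} [NormedField 𝕜] {z a b : 𝕜} {ε : ℝ} (hε : 0 < ε)
    (hz : z ≠ 0) (hb : ε < ‖z - b‖) :
    ‖(z - a) / (z - b)‖ ≤ exp ((1 + ‖b‖ / ε) * ‖a - b‖ / ‖z‖) := by
  have hzb : 0 < ‖z - b‖ := hε.trans hb
  have hnum : ‖z - a‖ ≤ ‖z - b‖ + ‖a - b‖ := by
    simpa only [norm_sub_rev b a] using norm_sub_le_norm_sub_add_norm_sub z b a
  -- `z` is `ε`-far from `b`, so `‖b‖ ≤ ‖b‖ / ε * ‖z - b‖`.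
  have hz_le : ‖z‖ ≤ (1 + ‖b‖ / ε) * ‖z - b‖ := by
    have h1 : ‖z‖ ≤ ‖z - b‖ + ‖b‖ := norm_le_norm_sub_add z b
    have h2 : ‖b‖ ≤ ‖b‖ / ε * ‖z - b‖ := by
      rw [div_mul_eq_mul_div, le_div_iff₀ hε]
      exact mul_le_mul_of_nonneg_left hb.le (norm_nonneg b)
    linarith
  calc ‖(z - a) / (z - b)‖ ≤ 1 + ‖a - b‖ / ‖z - b‖ := by
        rw [norm_div, div_le_iff₀ hzb, add_mul, one_mul, div_mul_cancel₀ _ hzb.ne']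
        exact hnum
    _ ≤ 1 + (1 + ‖b‖ / ε) * ‖a - b‖ / ‖z‖ := by
        gcongr 1 + ?_
        rw [div_le_div_iff₀ hzb (norm_pos_iff.2 hz)]
        nlinarith [norm_nonneg (a - b)]
    _ ≤ _ := by linarith [add_one_le_exp ((1 + ‖b‖ / ε) * ‖a - b‖ / ‖z‖)]

theorem one_add_abs_div_mul_abs_sub_le {a b lo hi ε : ℝ} (hε : 0 < ε) (ha : a ∈ Icc lo hi)
    (hb : b ∈ Icc lo hi) :
    (1 + |b| / ε) * |a - b| ≤ (1 + (|hi| + (hi - lo)) / ε) * (hi - lo) := by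
  have hab : |a - b| ≤ hi - lo :=
    abs_sub_le_iff.2 ⟨by linarith [ha.2, hb.1], by linarith [ha.1, hb.2]⟩
  have hb_abs : |b| ≤ |hi| + (hi - lo) :=
    abs_le.2 ⟨by linarith [neg_abs_le hi, hb.1], by linarith [le_abs_self hi, hb.2, hb.1]⟩
  have hlen : 0 ≤ |hi| + (hi - lo) := (abs_nonneg b).trans hb_abs
  gcongr

theorem Summable.sq_of_nonneg {ι : Type*} {f : ι → ℝ} (hf : Summable f) (hf0 : ∀ i, 0 ≤ f i) :
    Summable fun i ↦ f i ^ 2 :=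
  -- `f i ^ 2 ≤ (∑' j, f j) * f i`
  .of_nonneg_of_le (fun i ↦ sq_nonneg _)
    (fun i ↦ by rw [sq]; exact mul_le_mul_of_nonneg_right (hf.le_tsum i fun j _ ↦ hf0 j) (hf0 i))
    (hf.mul_left _)

theorem G_quotient_bound_general
    (E : ℕ → ℝ)
    (μ : ℕ → ℝ → ℝ)
    (hμ : ∀ j : ℕ, ∀ x : ℝ, μ j x ∈ Set.Icc (E (2 * j + 1)) (E (2 * j + 2)))
    (hgap : Summable (fun j : ℕ => E (2 * j + 2) - E (2 * j + 1)))
    (hgapw : Summable (fun j : ℕ => E (2 * j + 2) * (E (2 * j + 2) - E (2 * j + 1))))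
    (ε : ℝ) (hε : 0 < ε) :
    ∃ C : ℝ, ∀ z : ℂ, z ≠ 0 → ∀ x : ℝ,
      (∀ j : ℕ, ε < ‖z - (μ j 0 : ℝ)‖) →
      ‖∏' j : ℕ, (z - (μ j x : ℝ)) / (z - (μ j 0 : ℝ))‖ ≤ Real.exp (C / ‖z‖) := by
  set γ : ℕ → ℝ := fun j ↦ E (2 * j + 2) - E (2 * j + 1)
  set w : ℕ → ℝ := fun j ↦ (1 + (|E (2 * j + 2)| + γ j) / ε) * γ j
  have hγ0 (j : ℕ) : 0 ≤ γ j := sub_nonneg.2 ((hμ j 0).1.trans (hμ j 0).2)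
  have hw0 (j : ℕ) : 0 ≤ w j := by have := hγ0 j; positivity
  have hw : Summable w := by
    have hw_eq : w = fun j ↦ γ j + (|E (2 * j + 2) * γ j| + γ j ^ 2) / ε := by
      funext j; rw [abs_mul, abs_of_nonneg (hγ0 j)]; ring
    rw [hw_eq]
    exact hgap.add ((hgapw.abs.add (hgap.sq_of_nonneg hγ0)).div_const ε)
  refine ⟨∑' j, w j, fun z hz x hzμ ↦ ?_⟩
  rw [← tsum_div_const]
  refine norm_tprod_le_exp_tsum (hw.div_const _) (fun j ↦ div_nonneg (hw0 j) (norm_nonneg z))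
    fun j ↦ (norm_div_sub_le_exp hε hz (hzμ j)).trans (exp_le_exp.2 ?_)
  gcongr
  simpa only [Complex.norm_real, Real.norm_eq_abs, ← Complex.ofReal_sub] using
    one_add_abs_div_mul_abs_sub_le hε (hμ j x) (hμ j 0)

/-- Estimate of `|G(z,x)/G(z,0)| = |∏_j (z-μ_j(x))/(z-μ_j(0))| ≤ exp(C/|z|)`,
with `C` independent of `x` and `z`, for `z` staying at distance `> ε` from all
Dirichlet eigenvalues `μ_j(0)`.  The gap index `j ≥ 1` is encoded as `j+1` for
`j : ℕ`, so gap `j` is `[E (2*j+1), E (2*j+2)]`. -/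
theorem G_quotient_bound
    (E : ℕ → ℝ) (hE0 : 0 ≤ E 0) (hmono : StrictMono E)
    (μ : ℕ → ℝ → ℝ)
    (hμ : ∀ j : ℕ, ∀ x : ℝ, μ j x ∈ Set.Icc (E (2 * j + 1)) (E (2 * j + 2)))
    (hinv : Summable (fun j : ℕ => 1 / E (2 * j + 1)))
    (hgap : Summable (fun j : ℕ => E (2 * j + 2) - E (2 * j + 1)))
    (hgapw : Summable (fun j : ℕ => E (2 * j + 2) * (E (2 * j + 2) - E (2 * j + 1))))
    (ε : ℝ) (hε : 0 < ε) :
    ∃ C : ℝ, ∀ z : ℂ, z ≠ 0 → ∀ x : ℝ,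
      (∀ j : ℕ, ε < ‖z - (μ j 0 : ℝ)‖) →
      ‖∏' j : ℕ, (z - (μ j x : ℝ)) / (z - (μ j 0 : ℝ))‖ ≤ Real.exp (C / ‖z‖) :=
  G_quotient_bound_general E μ hμ hgap hgapw ε hε
end

section
/- Let f : ℝ → ℂ and K : {(x,y) : y ≥ x} → ℝ be measurable with |K(x,y)| ≤ C(x) Q(x+y) where Q(x) = ∫_{x/2}^∞ |q̃(s)| ds and ∫_ℝ (1+|x|²)|q̃(x)| dx < ∞. If f ∈ L²([x₀, ∞)) then for every x ≥ x₀ the function h(x) = f(x) + ∫_x^∞ K(x,y) f(y) dy is well defined and h ∈ L²([x₀, ∞)). -/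
/-!
For `x₀ ≤ x < y`, monotonicity of `C` and of `Q` gives `|K x y| ≤ u y := C x₀ Q(x₀ + y)`,
so `I + K` is dominated by the Volterra kernel `1_{x<y} u(y)`. Its Hilbert–Schmidt norm on
`[x₀,∞)²` is `∫_{x₀}^∞ (y - x₀) u(y)² dy` (Fubini on the triangle `x₀ ≤ x < y`), which is
finite because `Q ≤ ∫ |q̃|` and, by Fubini again,
`∫_{x₀}^∞ (1 + y - x₀) Q(x₀ + y) dy ≲ ∫ (1 + s²) |q̃ s| ds`.
Cauchy–Schwarz bounds `|∫_x^∞ K(x,y) f(y) dy|²` by `‖u‖²_{L²(x,∞)} ‖f‖²`, and integrating over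
`x ≥ x₀` gives the Hilbert–Schmidt norm times `‖f‖²`.
-/

open MeasureTheory Set

theorem eLpNorm_two_sq_eq_lintegral {α E : Type*} [MeasurableSpace α] [NormedAddCommGroup E]
    (f : α → E) (μ : Measure α) : eLpNorm f 2 μ ^ 2 = ∫⁻ x, ‖f x‖ₑ ^ 2 ∂μ := by
  rw [eLpNorm_eq_lintegral_rpow_enorm_toReal two_ne_zero ENNReal.ofNat_ne_top, ← ENNReal.rpow_two,
    ENNReal.toReal_ofNat, one_div, ENNReal.rpow_inv_rpow two_ne_zero]
  simp_rw [ENNReal.rpow_two]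

theorem memLp_two_of_lintegral_enorm_sq_lt_top {α E : Type*} [MeasurableSpace α]
    [NormedAddCommGroup E] {f : α → E} {μ : Measure α} (hf : AEStronglyMeasurable f μ)
    (h : ∫⁻ x, ‖f x‖ₑ ^ 2 ∂μ < ⊤) : MemLp f 2 μ := by
  rw [← eLpNorm_two_sq_eq_lintegral] at h
  exact ⟨hf, (ENNReal.pow_lt_top_iff.1 h).resolve_right two_ne_zero⟩

theorem lintegral_Ici_mul_lintegral_Ioi_eq (a : ℝ) {w g : ℝ → ENNReal} {φ : ℝ → ℝ}
    (hw : Measurable w) (hg : Measurable g) (hφ : Measurable φ) :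
    ∫⁻ x in Ici a, w x * ∫⁻ y in Ioi (φ x), g y
      = ∫⁻ y, (∫⁻ x in Ici a ∩ φ ⁻¹' Iio y, w x) * g y := by
  set S : Set (ℝ × ℝ) := {p | a ≤ p.1 ∧ φ p.1 < p.2}
  have hS : MeasurableSet S :=
    (measurableSet_le measurable_const measurable_fst).inter
      (measurableSet_lt (hφ.comp measurable_fst) measurable_snd)
  have hF : Measurable (S.indicator fun p => w p.1 * g p.2) :=
    ((hw.comp measurable_fst).mul (hg.comp measurable_snd)).indicator hS
  calc ∫⁻ x in Ici a, w x * ∫⁻ y in Ioi (φ x), g y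
      = ∫⁻ x, ∫⁻ y, S.indicator (fun p => w p.1 * g p.2) (x, y) := by
        rw [← lintegral_indicator measurableSet_Ici]
        refine lintegral_congr fun x => ?_
        by_cases hx : a ≤ x
        · rw [indicator_of_mem (mem_Ici.2 hx), ← lintegral_indicator measurableSet_Ioi,
            ← lintegral_const_mul _ (hg.indicator measurableSet_Ioi)]
          refine lintegral_congr fun y => ?_
          by_cases hy : φ x < y <;> simp [S, indicator, hx, hy]
        · simp [S, indicator, hx]
    _ = ∫⁻ y, ∫⁻ x, S.indicator (fun p => w p.1 * g p.2) (x, y) :=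
        lintegral_lintegral_swap hF.aemeasurable
    _ = ∫⁻ y, (∫⁻ x in Ici a ∩ φ ⁻¹' Iio y, w x) * g y := by
        refine lintegral_congr fun y => ?_
        rw [← lintegral_mul_const _ hw,
          ← lintegral_indicator (measurableSet_Ici.inter (hφ measurableSet_Iio))]
        refine lintegral_congr fun x => ?_
        simp [S, indicator]

theorem lintegral_Ici_lintegral_Ioi_eq (a : ℝ) {g : ℝ → ENNReal} (hg : Measurable g) :
    ∫⁻ x in Ici a, ∫⁻ y in Ioi x, g y = ∫⁻ y in Ici a, ENNReal.ofReal (y - a) * g y := by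
  have h := lintegral_Ici_mul_lintegral_Ioi_eq a measurable_const hg measurable_id (w := 1)
  simp only [Pi.one_apply, one_mul, preimage_id_eq, id_eq, setLIntegral_one, Ici_inter_Iio,
    Real.volume_Ico] at h
  rw [h, eq_comm]
  refine setLIntegral_eq_of_support_subset fun y hy => ?_
  simp only [Function.mem_support, ne_eq, mul_eq_zero, ENNReal.ofReal_eq_zero, not_or,
    not_le, sub_pos] at hy
  exact hy.1.le

theorem integrable_of_integrable_one_add_sq_mul {q : ℝ → ℝ} (hqm : Measurable q)
    (hq : Integrable fun x => (1 + |x| ^ 2) * |q x|) : Integrable q :=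
  hq.mono' hqm.aestronglyMeasurable <| .of_forall fun x =>
    le_mul_of_one_le_left (abs_nonneg _) (by linarith [sq_nonneg |x|])

theorem setLIntegral_one_add_sub_le (a s : ℝ) :
    ∫⁻ y in Ici a ∩ (fun y => (a + y) / 2) ⁻¹' Iio s, ENNReal.ofReal (1 + (y - a))
      ≤ ENNReal.ofReal ((12 + 12 * a ^ 2) * (1 + |s| ^ 2)) := by
  have hsub : Ici a ∩ (fun y => (a + y) / 2) ⁻¹' Iio s ⊆ Ico a (2 * s - a) :=
    fun y ⟨hay, hys⟩ => ⟨hay, by simp only [mem_preimage, mem_Iio] at hys; linarith⟩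
  calc _ ≤ ∫⁻ y in Ico a (2 * s - a), ENNReal.ofReal (1 + (y - a)) := lintegral_mono_set hsub
    _ ≤ ∫⁻ _ in Ico a (2 * s - a), ENNReal.ofReal (1 + (2 * s - a - a)) :=
        setLIntegral_mono measurable_const fun y hy =>
          ENNReal.ofReal_le_ofReal (by linarith [hy.2])
    _ = ENNReal.ofReal (1 + (2 * s - a - a)) * ENNReal.ofReal (2 * s - a - a) := by
        rw [setLIntegral_const, Real.volume_Ico]
    _ ≤ _ := by
        rcases le_or_gt (2 * s - a - a) 0 with h | h
        · simp [ENNReal.ofReal_of_nonpos h]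
        · rw [← ENNReal.ofReal_mul (by linarith), sq_abs]
          exact ENNReal.ofReal_le_ofReal (by nlinarith [sq_nonneg (s + a), sq_nonneg (a * s)])

section HalfTail

noncomputable def halfTail (q : ℝ → ℝ) (x : ℝ) : ℝ := ∫ s in Ioi (x / 2), |q s|

variable {q : ℝ → ℝ}

theorem halfTail_nonneg (x : ℝ) : 0 ≤ halfTail q x :=
  setIntegral_nonneg measurableSet_Ioi fun _ _ => abs_nonneg _

theorem halfTail_le_integral_abs (hq : Integrable q) (x : ℝ) : halfTail q x ≤ ∫ s, |q s| :=
  setIntegral_le_integral hq.abs (.of_forall fun _ => abs_nonneg _)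

theorem halfTail_antitone (hq : Integrable q) : Antitone (halfTail q) := fun x y hxy =>
  setIntegral_mono_set hq.abs.integrableOn (.of_forall fun _ => abs_nonneg _)
    (Ioi_subset_Ioi (by linarith)).eventuallyLE

theorem enorm_halfTail (hq : Integrable q) (x : ℝ) :
    ‖halfTail q x‖ₑ = ∫⁻ s in Ioi (x / 2), ‖q s‖ₑ := by
  rw [Real.enorm_of_nonneg (halfTail_nonneg x)]
  exact ofReal_integral_norm_eq_lintegral_enorm hq.integrableOn

theorem lintegral_Ici_mul_enorm_halfTail_lt_top (hqm : Measurable q)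
    (hq : Integrable fun x => (1 + |x| ^ 2) * |q x|) (a : ℝ) :
    ∫⁻ y in Ici a, ENNReal.ofReal (1 + (y - a)) * ‖halfTail q (a + y)‖ₑ < ⊤ := by
  simp_rw [enorm_halfTail (integrable_of_integrable_one_add_sq_mul hqm hq)]
  rw [lintegral_Ici_mul_lintegral_Ioi_eq a (by fun_prop) hqm.enorm (by fun_prop)]
  calc _ ≤ ∫⁻ s, ENNReal.ofReal (12 + 12 * a ^ 2) * ‖(1 + |s| ^ 2) * |q s|‖ₑ := by
        refine lintegral_mono fun s => ?_
        rw [enorm_mul, Real.enorm_of_nonneg (r := 1 + |s| ^ 2) (by positivity), Real.enorm_abs,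
          ← mul_assoc, ← ENNReal.ofReal_mul (by positivity)]
        exact mul_le_mul_left (setLIntegral_one_add_sub_le a s) _
    _ < ⊤ := by
        rw [lintegral_const_mul' _ _ ENNReal.ofReal_ne_top]
        exact ENNReal.mul_lt_top ENNReal.ofReal_lt_top hq.hasFiniteIntegral

theorem lintegral_Ici_mul_enorm_halfTail_sq_lt_top (hqm : Measurable q)
    (hq : Integrable fun x => (1 + |x| ^ 2) * |q x|) (a : ℝ) :
    ∫⁻ y in Ici a, ENNReal.ofReal (1 + (y - a)) * ‖halfTail q (a + y)‖ₑ ^ 2 < ⊤ := by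
  set A : ℝ := ∫ s, |q s|
  have hsq : ∀ y, ‖halfTail q y‖ₑ ^ 2 ≤ ‖A‖ₑ * ‖halfTail q y‖ₑ := fun y => by
    rw [sq]
    gcongr
    rw [enorm_le_iff_norm_le, Real.norm_of_nonneg (halfTail_nonneg y),
      Real.norm_of_nonneg (integral_nonneg fun _ => abs_nonneg _)]
    exact halfTail_le_integral_abs (integrable_of_integrable_one_add_sq_mul hqm hq) y
  calc _ ≤ ∫⁻ y in Ici a, ‖A‖ₑ * (ENNReal.ofReal (1 + (y - a)) * ‖halfTail q (a + y)‖ₑ) :=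
        lintegral_mono fun y => by rw [mul_left_comm]; gcongr; exact hsq _
    _ < ⊤ := by
        rw [lintegral_const_mul' _ _ enorm_ne_top]
        exact ENNReal.mul_lt_top enorm_lt_top (lintegral_Ici_mul_enorm_halfTail_lt_top hqm hq a)

end HalfTail

section Volterra

variable {𝕜 : Type*} [RCLike 𝕜] {a : ℝ} {k : ℝ → ℝ → 𝕜} {u : ℝ → ℝ} {f : ℝ → 𝕜}

theorem stronglyMeasurable_setIntegral_Ioi {E : Type*} [NormedAddCommGroup E] [NormedSpace ℝ E]
    {F : ℝ → ℝ → E} (hF : StronglyMeasurable (Function.uncurry F)) :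
    StronglyMeasurable fun x => ∫ y in Ioi x, F x y := by
  have hS : MeasurableSet {p : ℝ × ℝ | p.1 < p.2} :=
    measurableSet_lt measurable_fst measurable_snd
  convert (hF.indicator hS).integral_prod_right' (ν := volume) using 1
  funext x
  rw [← integral_indicator measurableSet_Ioi]
  congr 1 with y

theorem aestronglyMeasurable_setIntegral_Ioi_mul (hk : Measurable (Function.uncurry k))
    (hf : AEStronglyMeasurable f (volume.restrict (Ici a))) :
    AEStronglyMeasurable (fun x => ∫ y in Ioi x, k x y * f y) (volume.restrict (Ici a)) := by
  have hT : StronglyMeasurable fun x => ∫ y in Ioi x, k x y * hf.mk f y :=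
    stronglyMeasurable_setIntegral_Ioi
      (hk.stronglyMeasurable.mul (hf.stronglyMeasurable_mk.comp_measurable measurable_snd))
  have hfg := (ae_restrict_iff' measurableSet_Ici).1 hf.ae_eq_mk
  refine hT.aestronglyMeasurable.congr
    ((ae_restrict_iff' measurableSet_Ici).2 (.of_forall fun x hx => ?_))
  refine setIntegral_congr_ae measurableSet_Ioi ?_
  filter_upwards [hfg] with y hy hxy
  rw [hy (Ioi_subset_Ici hx hxy)]

theorem memLp_two_of_lintegral_one_add_mul_lt_top (hu : Measurable u)
    (h : ∫⁻ y in Ici a, ENNReal.ofReal (1 + (y - a)) * ‖u y‖ₑ ^ 2 < ⊤) :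
    MemLp u 2 (volume.restrict (Ici a)) := by
  refine memLp_two_of_lintegral_enorm_sq_lt_top hu.aestronglyMeasurable (h.trans_le' ?_)
  refine setLIntegral_mono' measurableSet_Ici fun y hy => le_mul_of_one_le_left' ?_
  exact ENNReal.one_le_ofReal.2 (by linarith [mem_Ici.1 hy])

theorem lintegral_Ici_lintegral_Ioi_enorm_sq_lt_top (hu : Measurable u)
    (h : ∫⁻ y in Ici a, ENNReal.ofReal (1 + (y - a)) * ‖u y‖ₑ ^ 2 < ⊤) :
    ∫⁻ x in Ici a, ∫⁻ y in Ioi x, ‖u y‖ₑ ^ 2 < ⊤ := by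
  rw [lintegral_Ici_lintegral_Ioi_eq a (hu.enorm.pow_const 2)]
  refine h.trans_le' (lintegral_mono fun y => ?_)
  gcongr
  linarith

theorem integrableOn_Ioi_mul (hk : Measurable (Function.uncurry k))
    (hku : ∀ x y, a ≤ x → x < y → ‖k x y‖ ≤ u y) (hu : MemLp u 2 (volume.restrict (Ici a)))
    (hf : MemLp f 2 (volume.restrict (Ici a))) {x : ℝ} (hx : a ≤ x) :
    IntegrableOn (fun y => k x y * f y) (Ioi x) := by
  have hsub := Measure.restrict_mono_set volume (Ioi_subset_Ici hx)
  have hmaj : IntegrableOn (fun y => u y * ‖f y‖) (Ioi x) :=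
    (hu.integrable_mul hf.norm).mono_measure hsub
  refine hmaj.mono' ((hk.comp measurable_prodMk_left).aestronglyMeasurable.mul
    (hf.1.mono_measure hsub)) ?_
  filter_upwards [ae_restrict_mem measurableSet_Ioi] with y hy
  rw [norm_mul]
  exact mul_le_mul_of_nonneg_right (hku x y hx hy) (norm_nonneg _)

theorem enorm_setIntegral_Ioi_mul_le (hku : ∀ x y, a ≤ x → x < y → ‖k x y‖ ≤ u y)
    (hu : AEStronglyMeasurable u (volume.restrict (Ici a)))
    (hf : AEStronglyMeasurable f (volume.restrict (Ici a))) {x : ℝ} (hx : a ≤ x) :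
    ‖∫ y in Ioi x, k x y * f y‖ₑ
      ≤ eLpNorm u 2 (volume.restrict (Ioi x)) * eLpNorm f 2 (volume.restrict (Ici a)) := by
  have hsub := Measure.restrict_mono_set volume (Ioi_subset_Ici hx)
  calc ‖∫ y in Ioi x, k x y * f y‖ₑ
      ≤ ∫⁻ y in Ioi x, ‖k x y * f y‖ₑ := enorm_integral_le_lintegral_enorm _
    _ ≤ ∫⁻ y in Ioi x, ‖u y • f y‖ₑ := by
        refine setLIntegral_mono' measurableSet_Ioi fun y hy => ?_
        rw [enorm_mul, enorm_smul]
        gcongr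
        exact enorm_le_iff_norm_le.2 ((hku x y hx hy).trans (le_abs_self _))
    _ = eLpNorm (u • f) 1 (volume.restrict (Ioi x)) := eLpNorm_one_eq_lintegral_enorm.symm
    _ ≤ eLpNorm u 2 (volume.restrict (Ioi x)) * eLpNorm f 2 (volume.restrict (Ioi x)) :=
        eLpNorm_smul_le_mul_eLpNorm (hf.mono_measure hsub) (hu.mono_measure hsub)
    _ ≤ _ := by gcongr

theorem memLp_two_setIntegral_Ioi_mul (hk : Measurable (Function.uncurry k))
    (hku : ∀ x y, a ≤ x → x < y → ‖k x y‖ ≤ u y) (hum : Measurable u)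
    (hu : ∫⁻ y in Ici a, ENNReal.ofReal (1 + (y - a)) * ‖u y‖ₑ ^ 2 < ⊤)
    (hf : MemLp f 2 (volume.restrict (Ici a))) :
    MemLp (fun x => ∫ y in Ioi x, k x y * f y) 2 (volume.restrict (Ici a)) := by
  refine memLp_two_of_lintegral_enorm_sq_lt_top
    (aestronglyMeasurable_setIntegral_Ioi_mul hk hf.1) ?_
  set N := eLpNorm f 2 (volume.restrict (Ici a))
  calc ∫⁻ x in Ici a, ‖∫ y in Ioi x, k x y * f y‖ₑ ^ 2
      ≤ ∫⁻ x in Ici a, (∫⁻ y in Ioi x, ‖u y‖ₑ ^ 2) * N ^ 2 := by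
        refine setLIntegral_mono' measurableSet_Ici fun x hx => ?_
        rw [← eLpNorm_two_sq_eq_lintegral, ← mul_pow]
        gcongr
        exact enorm_setIntegral_Ioi_mul_le hku hum.aestronglyMeasurable hf.1 hx
    _ = (∫⁻ x in Ici a, ∫⁻ y in Ioi x, ‖u y‖ₑ ^ 2) * N ^ 2 :=
        lintegral_mul_const' _ _ (ENNReal.pow_ne_top hf.eLpNorm_ne_top)
    _ < ⊤ := ENNReal.mul_lt_top
        (lintegral_Ici_lintegral_Ioi_enorm_sq_lt_top hum hu)
        (ENNReal.pow_lt_top hf.eLpNorm_lt_top)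

end Volterra

/-- The transformation operator `I + K` maps `L²([x₀,∞))` into itself:
if `|K(x,y)| ≤ C(x) Q(x+y)` for `y ≥ x`, with `C` positive and decreasing,
`Q(x) = ∫_{x/2}^∞ |q̃|`, `∫(1+|x|²)|q̃| < ∞`, and `f ∈ L²([x₀,∞))`, then
`h(x) = f(x) + ∫_x^∞ K(x,y) f(y) dy` is well defined for `x ≥ x₀` and
`h ∈ L²([x₀,∞))`. -/
theorem transformation_operator_maps_L2
    (q : ℝ → ℝ) (hqm : Measurable q)
    (hq : Integrable (fun x => (1 + |x| ^ 2) * |q x|))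
    (Q : ℝ → ℝ) (hQ : ∀ x, Q x = ∫ s in Set.Ioi (x / 2), |q s|)
    (K : ℝ → ℝ → ℝ) (hKm : Measurable (Function.uncurry K))
    (C : ℝ → ℝ) (hC : ∀ x, 0 < C x) (hCmono : Antitone C)
    (hK : ∀ x y : ℝ, x ≤ y → |K x y| ≤ C x * Q (x + y))
    (x₀ : ℝ) (f : ℝ → ℂ)
    (hf : MemLp f 2 (volume.restrict (Set.Ici x₀))) :
    (∀ x : ℝ, x₀ ≤ x →
      Integrable (fun y => (K x y : ℂ) * f y) (volume.restrict (Set.Ioi x))) ∧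
    MemLp (fun x => f x + ∫ y in Set.Ioi x, (K x y : ℂ) * f y) 2
      (volume.restrict (Set.Ici x₀)) := by
  obtain rfl : Q = halfTail q := funext hQ
  have hQanti := halfTail_antitone (integrable_of_integrable_one_add_sq_mul hqm hq)
  set u : ℝ → ℝ := fun y => C x₀ * halfTail q (x₀ + y)
  have hum : Measurable u := (hQanti.measurable.comp (measurable_const_add x₀)).const_mul _
  have hku : ∀ x y, x₀ ≤ x → x < y → ‖(K x y : ℂ)‖ ≤ u y := fun x y hx hxy => by
    rw [Complex.norm_real, Real.norm_eq_abs]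
    calc |K x y| ≤ C x * halfTail q (x + y) := hK x y hxy.le
      _ ≤ C x₀ * halfTail q (x₀ + y) :=
        mul_le_mul (hCmono hx) (hQanti (by linarith)) (halfTail_nonneg _) (hC x₀).le
  have hu : ∫⁻ y in Ici x₀, ENNReal.ofReal (1 + (y - x₀)) * ‖u y‖ₑ ^ 2 < ⊤ := by
    simp_rw [u, enorm_mul, mul_pow, mul_left_comm _ (‖C x₀‖ₑ ^ 2)]
    rw [lintegral_const_mul' _ _ (by finiteness)]
    exact ENNReal.mul_lt_top (by finiteness)
      (lintegral_Ici_mul_enorm_halfTail_sq_lt_top hqm hq x₀)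
  have hk : Measurable (Function.uncurry fun x y => (K x y : ℂ)) :=
    Complex.measurable_ofReal.comp hKm
  exact ⟨fun x hx => integrableOn_Ioi_mul hk hku
      (memLp_two_of_lintegral_one_add_mul_lt_top hum hu) hf hx,
    hf.add (memLp_two_setIntegral_Ioi_mul hk hku hum hu hf)⟩
end

section
/- Let G, H, N, Y be functions satisfying G(z,x) N(z,x) + H(z,x)² = Y(z), H = (1/2) ∂_x G, and ∂_x² G(z,x) = 2((p(x) - z) G(z,x) - N(z,x)), with G(z,x) ≠ 0. Then m(z,x) := (H(z,x) ± Y(z)^{1/2})/G(z,x) satisfies the Riccati equation ∂_x m + m² = p(x) - z. -/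
/-!
Write `m = (H + w)/G` with `w² = Y`. By the quotient rule the numerator of `m'` is
`H' G - (H + w) G' = (q G - N) G - 2 H (H + w)` with `q = p - z`, and the identity
`G N + H² = w²` turns `G N + 2 H² + 2 H w` into `(H + w)²`, so `m' = q - m²`.
-/

theorem quotient_rule_numerator_eq_of_mul_add_sq_eq {K : Type*} [Field K] {g h n q w : K}
    (hg : g ≠ 0) (hghn : g * n + h ^ 2 = w ^ 2) :
    ((q * g - n) * g - (h + w) * (2 * h)) / g ^ 2 = q - ((h + w) / g) ^ 2 := by
  field_simp
  linear_combination -hghn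

variable {𝕜 𝔽 : Type*} [NontriviallyNormedField 𝕜] [NontriviallyNormedField 𝔽]
  [NormedAlgebra 𝕜 𝔽] in
theorem hasDerivAt_add_div_of_mul_add_sq_eq {G H N : 𝕜 → 𝔽} {q w : 𝔽} {x : 𝕜}
    (hG : HasDerivAt G (2 * H x) x) (hH : HasDerivAt H (q * G x - N x) x)
    (hGHN : G x * N x + H x ^ 2 = w ^ 2) (hGx : G x ≠ 0) :
    HasDerivAt (fun y ↦ (H y + w) / G y) (q - ((H x + w) / G x) ^ 2) x := by
  rw [← quotient_rule_numerator_eq_of_mul_add_sq_eq hGx hGHN]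
  exact (hH.add_const w).div hG hGx

/-- `w` is either square root of `Y`, so `m` covers both Weyl functions `m_±`. -/
theorem riccati_from_levitan_identities
    (p : ℝ → ℝ) (z : ℂ) (Y w : ℂ) (hw : w ^ 2 = Y)
    (G H N : ℝ → ℂ)
    (hGN : ∀ x, G x * N x + (H x) ^ 2 = Y)
    (hG' : ∀ x, HasDerivAt G (2 * H x) x)
    (hH' : ∀ x, HasDerivAt H (((p x : ℂ) - z) * G x - N x) x)
    (hGne : ∀ x, G x ≠ 0)
    (m : ℝ → ℂ) (hm : ∀ x, m x = (H x + w) / G x) :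
    ∀ x, HasDerivAt m (((p x : ℂ) - z) - (m x) ^ 2) x := by
  obtain rfl : m = fun x ↦ (H x + w) / G x := funext hm
  subst hw
  exact fun x ↦ hasDerivAt_add_div_of_mul_add_sq_eq (hG' x) (hH' x) (hGN x) (hGne x)
end
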